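/- arXiv:1111.2984 — 3 statements merged into one kernel-verified Lean document; each statement's English description precedes it below -/
import Mathlib

section
/- For every natural number N ≥ 1, at least one of the first N² Fibonacci numbers is divisible by N; that is, there exists t with 1 ≤ t ≤ N² such that N divides fib t. -/
/-!
The pairs `(fib n, fib (n + 1))` reduced mod `N` are the orbit of `(0, 1)` under the invertible
map `(a, b) ↦ (b, a + b)` on the `N²` pairs of residues. An invertible map of a finite set returns
every point to itself within as many steps as the set has elements, so some `t` with
`1 ≤ t ≤ N²` has `(fib t, fib (t + 1)) ≡ (0, 1)`, and in particular `N ∣ fib t`.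
-/

open Function

def fibStep {R : Type*} [Add R] (p : R × R) : R × R := (p.2, p.1 + p.2)

theorem fibStep_injective {R : Type*} [Add R] [IsRightCancelAdd R] :
    Injective (fibStep : R × R → R × R) := by
  rintro ⟨a, b⟩ ⟨a', b'⟩ h
  simp only [fibStep, Prod.mk.injEq] at h
  obtain ⟨rfl, hab⟩ := h
  rw [add_right_cancel hab]

theorem fibStep_iterate_zero_one {R : Type*} [AddMonoidWithOne R] (n : ℕ) :
    fibStep^[n] ((0 : R), (1 : R)) = ((Nat.fib n : R), (Nat.fib (n + 1) : R)) := by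
  induction n with
  | zero => simp
  | succ n ih => rw [iterate_succ_apply', ih, fibStep, Nat.fib_add_two, Nat.cast_add]

theorem exists_pos_le_card_sq_natCast_fib_eq_zero (R : Type*) [AddGroupWithOne R] [Fintype R] :
    ∃ t, 0 < t ∧ t ≤ Fintype.card R ^ 2 ∧ (Nat.fib t : R) = 0 := by
  set x : R × R := (0, 1)
  have hx : x ∈ periodicPts fibStep := fibStep_injective.mem_periodicPts x
  refine ⟨minimalPeriod fibStep x, minimalPeriod_pos_of_mem_periodicPts hx, ?_, ?_⟩
  · simpa [sq] using minimalPeriod_le_card (f := fibStep) (x := x)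
  · have h := isPeriodicPt_minimalPeriod fibStep x
    rw [IsPeriodicPt, IsFixedPt, fibStep_iterate_zero_one (R := R)] at h
    exact congrArg Prod.fst h

theorem exists_fib_divisible (N : ℕ) (hN : 1 ≤ N) :
    ∃ t : ℕ, 1 ≤ t ∧ t ≤ N ^ 2 ∧ N ∣ Nat.fib t := by
  have : NeZero N := ⟨by omega⟩
  obtain ⟨t, ht_pos, ht_le, ht_fib⟩ := exists_pos_le_card_sq_natCast_fib_eq_zero (ZMod N)
  rw [ZMod.card] at ht_le
  exact ⟨t, ht_pos, ht_le, (ZMod.natCast_eq_zero_iff _ _).mp ht_fib⟩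
end

section
/- Let N ≥ 3 and let A₂ = !![1, 1; 1, 2] act on (ZMod N)² . For every point p ∈ (ZMod N)², the orbit { A₂^t • p : t ∈ ℕ } of p under the discrete cat map has cardinality at most N²/2; in particular the orbit is a proper subset of (ZMod N)², so no orbit visits every point of the grid (an image is not dense in itself under the discrete cat map). -/
/-!
Writing `F = !![0, 1; 1, 1]`, the cat matrix is `F²`, so all its powers lie in the commutative
ring of matrices `fibMatrix (a, b) = a • 1 + b • F`, and they have determinant `1`. Multiplication
by `F` permutes these `N²` matrices and negates the determinant, so when `1 ≠ -1` in `ZMod N`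
at most half of them have determinant `1`. The orbit of `p` is the image of the powers, hence
has at most `N² / 2` points.
-/

open Matrix

theorem Set.two_mul_ncard_le_card_of_injOn_of_disjoint {X : Type*} [Finite X] {s t : Set X}
    {f : X → X} (hmaps : Set.MapsTo f s t) (hinj : Set.InjOn f s) (hdisj : Disjoint s t) :
    2 * s.ncard ≤ Nat.card X := by
  have hst : s.ncard ≤ t.ncard := Set.ncard_le_ncard_of_injOn f hmaps hinj
  have hunion : s.ncard + t.ncard ≤ Nat.card X := by
    rw [← Set.ncard_union_eq hdisj, ← Set.ncard_univ]
    exact Set.ncard_le_ncard (Set.subset_univ _)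
  omega

section FibMatrix

variable {R : Type*} [CommRing R]

def fibMatrix (x : R × R) : Matrix (Fin 2) (Fin 2) R :=
  !![x.1, x.2; x.2, x.1 + x.2]

theorem fibMatrix_mul_fibMatrix (x y : R × R) :
    fibMatrix x * fibMatrix y =
      fibMatrix (x.1 * y.1 + x.2 * y.2, x.1 * y.2 + x.2 * y.1 + x.2 * y.2) := by
  ext i j
  fin_cases i <;> fin_cases j <;> simp [fibMatrix] <;> ring

theorem exists_fibMatrix_eq_pow (x : R × R) (t : ℕ) : ∃ y, fibMatrix x ^ t = fibMatrix y := by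
  induction t with
  | zero => exact ⟨(1, 0), by simp [fibMatrix, one_fin_two]⟩
  | succ t ih =>
    obtain ⟨y, hy⟩ := ih
    exact ⟨_, by rw [pow_succ, hy, fibMatrix_mul_fibMatrix]⟩

/-- Right multiplication by `fibMatrix (0, 1)`, which has determinant `-1`. -/
def fibShift (x : R × R) : R × R := (x.2, x.1 + x.2)

theorem fibShift_injective : Function.Injective (fibShift : R × R → R × R) := by
  rintro ⟨a, b⟩ ⟨c, d⟩ h
  simp only [fibShift, Prod.mk.injEq] at h
  obtain ⟨rfl, h⟩ := h
  simpa using h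

theorem det_fibMatrix_fibShift (x : R × R) :
    (fibMatrix (fibShift x)).det = -(fibMatrix x).det := by
  simp only [fibMatrix, fibShift, det_fin_two_of]
  ring

theorem two_mul_ncard_det_fibMatrix_eq_one_le [Finite R] (h : (-1 : R) ≠ 1) :
    2 * {x : R × R | (fibMatrix x).det = 1}.ncard ≤ Nat.card R ^ 2 := by
  rw [sq, ← Nat.card_prod]
  refine Set.two_mul_ncard_le_card_of_injOn_of_disjoint (f := fibShift)
    (t := {x | (fibMatrix x).det = -1}) ?_ fibShift_injective.injOn ?_
  · intro x (hx : (fibMatrix x).det = 1)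
    simp [det_fibMatrix_fibShift, hx]
  · rw [Set.disjoint_left]
    intro x hx hx'
    exact h (hx'.symm.trans hx)

end FibMatrix

theorem orbit_not_dense (N : ℕ) (hN : 3 ≤ N) (p : Fin 2 → ZMod N) :
    Set.ncard {q : Fin 2 → ZMod N |
        ∃ t : ℕ, q = ((!![1, 1; 1, 2] : Matrix (Fin 2) (Fin 2) (ZMod N)) ^ t).mulVec p}
      ≤ N ^ 2 / 2 ∧
    {q : Fin 2 → ZMod N |
        ∃ t : ℕ, q = ((!![1, 1; 1, 2] : Matrix (Fin 2) (Fin 2) (ZMod N)) ^ t).mulVec p}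
      ≠ Set.univ := by
  have : Fact (2 < N) := ⟨hN⟩
  have : NeZero N := ⟨by omega⟩
  set C := {x : ZMod N × ZMod N | (fibMatrix x).det = 1}
  have hcat : (!![1, 1; 1, 2] : Matrix (Fin 2) (Fin 2) (ZMod N)) = fibMatrix (1, 1) := by
    simp only [fibMatrix]; norm_num
  have horbit : {q : Fin 2 → ZMod N |
      ∃ t : ℕ, q = ((!![1, 1; 1, 2] : Matrix (Fin 2) (Fin 2) (ZMod N)) ^ t).mulVec p} ⊆
      (fun x => fibMatrix x *ᵥ p) '' C := by
    rintro q ⟨t, rfl⟩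
    obtain ⟨y, hy⟩ := exists_fibMatrix_eq_pow ((1, 1) : ZMod N × ZMod N) t
    refine ⟨y, ?_, by rw [hcat, hy]⟩
    show (fibMatrix y).det = 1
    rw [← hy, det_pow]
    simp [fibMatrix, det_fin_two_of]
  have hC : 2 * C.ncard ≤ N ^ 2 := by
    simpa only [Nat.card_zmod] using
      two_mul_ncard_det_fibMatrix_eq_one_le (R := ZMod N) ZMod.neg_one_ne_one
  have hle := (Set.ncard_le_ncard horbit).trans Set.ncard_image_le
  refine ⟨by omega, fun huniv => ?_⟩
  rw [huniv, Set.ncard_univ, Nat.card_fun, Nat.card_zmod, Nat.card_fin] at hle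
  have : 0 < N ^ 2 := by positivity
  omega
end

section
/- For every natural number s ≥ 1, if N = 2·5^s then the period of Arnold's discrete cat map on an N×N grid equals 3N; that is, the least positive integer M with !![1,1;1,2]^M = 1 over ZMod (2·5^s) is M = 3·(2·5^s) = 6·5^s. -/
/-!
Write `A = !![1, 1; 1, 2]`. Modulo `2` it has order `3`, and by the Chinese remainder theorem
its order modulo `2 * 5 ^ s` is the lcm of its orders modulo `2` and modulo `5 ^ s`.
Modulo `5` it has order `10`, and over `ℤ` one has `A ^ 10 = 1 + 5 B` with `B ≢ 0 (mod 5)`.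
For an odd prime `p`, `(1 + p B) ^ (p ^ k) = 1 + p ^ (k + 1) (B + p W)`, so `1 + p B` has
order exactly `p ^ (s - 1)` modulo `p ^ s`; hence `A` has order `10 * 5 ^ (s - 1) = 2 * 5 ^ s`
modulo `5 ^ s`, and the period is `lcm 3 (2 * 5 ^ s) = 3 * (2 * 5 ^ s)`.
-/

open Polynomial

theorem exists_one_add_mul_pow_eq_of_odd {R : Type*} [CommRing R] {p : ℕ} (hp : Odd p) (c : R) :
    ∃ v : R, (1 + p * c) ^ p = 1 + p ^ 2 * c * (1 + p * v) := by
  obtain ⟨v, hv⟩ := odd_sq_dvd_geom_sum₂_sub 1 c hp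
  refine ⟨v, ?_⟩
  have hgeom := geom_sum₂_mul (1 + p * c) 1 p
  simp only [one_pow, mul_one] at hv hgeom
  linear_combination -hgeom + p * c * hv

-- The identity holds in `ℤ[X]` at `X`, so in every ring at `b` by evaluation.
theorem exists_one_add_nsmul_pow_pow_eq_of_odd {S : Type*} [Ring S] {p : ℕ} (hp : Odd p)
    (b : S) (n : ℕ) : ∃ w : S, (1 + p • b) ^ p ^ n = 1 + p ^ (n + 1) • (b + p • w) := by
  suffices h : ∃ w : ℤ[X],
      (1 + (p : ℤ[X]) * X) ^ p ^ n = 1 + (p : ℤ[X]) ^ (n + 1) * (X + (p : ℤ[X]) * w) by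
    obtain ⟨w, hw⟩ := h
    refine ⟨aeval b w, ?_⟩
    simpa [nsmul_eq_mul, mul_add] using congrArg (aeval b) hw
  induction n with
  | zero => exact ⟨0, by ring⟩
  | succ n ih =>
    obtain ⟨w, hw⟩ := ih
    obtain ⟨v, hv⟩ :=
      exists_one_add_mul_pow_eq_of_odd hp ((p : ℤ[X]) ^ n * (X + (p : ℤ[X]) * w))
    refine ⟨w + (X + (p : ℤ[X]) * w) * v, ?_⟩
    rw [pow_succ, pow_mul, hw]
    linear_combination hv

theorem orderOf_eq_lcm_of_injective_prod {G H K : Type*} [Monoid G] [Monoid H] [Monoid K]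
    (f : G →* H) (g : G →* K) (hfg : Function.Injective (f.prod g)) (x : G) :
    orderOf x = (orderOf (f x)).lcm (orderOf (g x)) := by
  rw [← orderOf_injective _ hfg x, Prod.orderOf]
  rfl

theorem isLeast_orderOf {G : Type*} [Monoid G] {x : G} (hx : IsOfFinOrder x) :
    IsLeast {n | 0 < n ∧ x ^ n = 1} (orderOf x) :=
  ⟨⟨hx.orderOf_pos, pow_orderOf_eq_one x⟩, fun _ hn => orderOf_le_of_pow_eq_one hn.1 hn.2⟩

section MatrixOrder

variable {ι : Type*} [Fintype ι] [DecidableEq ι]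

theorem orderOf_matrix_zmod_mul_eq_lcm {a b : ℕ} (hab : a.Coprime b)
    (M : Matrix ι ι (ZMod (a * b))) :
    orderOf M = (orderOf ((ZMod.castHom (dvd_mul_right a b) (ZMod a)).mapMatrix M)).lcm
      (orderOf ((ZMod.castHom (dvd_mul_left b a) (ZMod b)).mapMatrix M)) := by
  set f := ZMod.castHom (dvd_mul_right a b) (ZMod a)
  set g := ZMod.castHom (dvd_mul_left b a) (ZMod b)
  have hcrt : (ZMod.chineseRemainder hab : ZMod (a * b) →+* ZMod a × ZMod b) = f.prod g :=
    RingHom.ext_zmod _ _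
  have hfg : Function.Injective (f.prod g) := hcrt ▸ (ZMod.chineseRemainder hab).injective
  refine orderOf_eq_lcm_of_injective_prod
    (f.mapMatrix.toMonoidHom : Matrix ι ι (ZMod (a * b)) →* Matrix ι ι (ZMod a))
    g.mapMatrix.toMonoidHom (fun M M' h => ?_) M
  ext i j
  exact hfg (Prod.ext (congrFun₂ (congrArg Prod.fst h) i j)
    (congrFun₂ (congrArg Prod.snd h) i j))

theorem mapMatrix_intCast_one_add_eq_one_iff {m : ℕ} (D : Matrix ι ι ℤ) :
    (Int.castRingHom (ZMod m)).mapMatrix (1 + D) = 1 ↔ ∀ i j, (m : ℤ) ∣ D i j := by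
  rw [map_add, map_one, add_eq_left]
  simp [← Matrix.ext_iff, ZMod.intCast_zmod_eq_zero_iff_dvd]

variable {p : ℕ} [Fact p.Prime]

theorem orderOf_mapMatrix_one_add_nsmul (hp : Odd p) {B : Matrix ι ι ℤ} {i j : ι}
    (hB : ¬ (p : ℤ) ∣ B i j) (n : ℕ) :
    orderOf ((Int.castRingHom (ZMod (p ^ (n + 1)))).mapMatrix (1 + p • B)) = p ^ n := by
  have hpow (k : ℕ) : ∃ w : Matrix ι ι ℤ,
      (Int.castRingHom (ZMod (p ^ (n + 1)))).mapMatrix (1 + p • B) ^ p ^ k =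
        (Int.castRingHom (ZMod (p ^ (n + 1)))).mapMatrix (1 + p ^ (k + 1) • (B + p • w)) := by
    obtain ⟨w, hw⟩ := exists_one_add_nsmul_pow_pow_eq_of_odd hp B k
    exact ⟨w, by rw [← map_pow, hw]⟩
  cases n with
  | zero =>
    rw [pow_zero, orderOf_eq_one_iff, mapMatrix_intCast_one_add_eq_one_iff]
    intro i j
    simp
  | succ n =>
    apply orderOf_eq_prime_pow
    · obtain ⟨w, hw⟩ := hpow n
      rw [hw, mapMatrix_intCast_one_add_eq_one_iff]
      intro h
      have hij := h i j
      simp only [Matrix.smul_apply, Matrix.add_apply] at hij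
      simp only [nsmul_eq_mul, Nat.cast_pow] at hij
      rw [pow_succ _ (n + 1), mul_dvd_mul_iff_left
        (pow_ne_zero _ (by exact_mod_cast (Fact.out : p.Prime).ne_zero))] at hij
      exact hB ((Int.dvd_add_left (dvd_mul_right _ _)).1 hij)
    · obtain ⟨w, hw⟩ := hpow (n + 1)
      rw [hw, mapMatrix_intCast_one_add_eq_one_iff]
      intro i j
      simp [Matrix.smul_apply, nsmul_eq_mul]

theorem orderOf_mapMatrix_eq_mul_pow (hp : Odd p) {A B : Matrix ι ι ℤ} {d : ℕ}
    (hd : orderOf ((Int.castRingHom (ZMod p)).mapMatrix A) = d) (hA : A ^ d = 1 + p • B)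
    {i j : ι} (hB : ¬ (p : ℤ) ∣ B i j) (n : ℕ) :
    orderOf ((Int.castRingHom (ZMod (p ^ (n + 1)))).mapMatrix A) = d * p ^ n := by
  set x := (Int.castRingHom (ZMod (p ^ (n + 1)))).mapMatrix A
  set π := ZMod.castHom (dvd_pow_self p n.succ_ne_zero) (ZMod p)
  have hreduce : π.mapMatrix x = (Int.castRingHom (ZMod p)).mapMatrix A := by
    rw [← RingHom.comp_apply, RingHom.mapMatrix_comp, RingHom.ext_int (π.comp _)]
  have hdvd : d ∣ orderOf x := by
    have := orderOf_map_dvd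
      (π.mapMatrix.toMonoidHom : Matrix ι ι (ZMod (p ^ (n + 1))) →* Matrix ι ι (ZMod p)) x
    rw [← hd, ← hreduce]
    exact this
  have hd0 : d ≠ 0 := by
    rintro rfl
    have hij := congrFun (congrFun (add_eq_left.1 hA.symm) i) j
    simp [Matrix.smul_apply, (Fact.out : p.Prime).ne_zero] at hij
    exact hB (hij ▸ dvd_zero _)
  have hpow : orderOf (x ^ d) = p ^ n := by
    rw [← map_pow, hA]
    exact orderOf_mapMatrix_one_add_nsmul hp hB n
  rw [orderOf_pow_of_dvd hd0 hdvd] at hpow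
  exact Nat.eq_mul_of_div_eq_right hdvd hpow

end MatrixOrder

abbrev arnoldCatMatrix (R : Type*) [Ring R] : Matrix (Fin 2) (Fin 2) R := !![1, 1; 1, 2]

theorem RingHom.mapMatrix_arnoldCatMatrix {R S : Type*} [Ring R] [Ring S] (f : R →+* S) :
    f.mapMatrix (arnoldCatMatrix R) = arnoldCatMatrix S := by
  ext i j
  fin_cases i <;> fin_cases j <;> simp [map_ofNat]

theorem arnoldCatMatrix_int_pow_ten :
    arnoldCatMatrix ℤ ^ 10 = 1 + 5 • !![836, 1353; 1353, 2189] := by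
  decide

theorem orderOf_arnoldCatMatrix_zmod_two : orderOf (arnoldCatMatrix (ZMod 2)) = 3 := by
  rw [orderOf_eq_iff (by norm_num)]
  decide

theorem orderOf_arnoldCatMatrix_zmod_five : orderOf (arnoldCatMatrix (ZMod 5)) = 10 := by
  rw [orderOf_eq_iff (by norm_num)]
  decide

theorem orderOf_arnoldCatMatrix_zmod_five_pow (n : ℕ) :
    orderOf (arnoldCatMatrix (ZMod (5 ^ (n + 1)))) = 2 * 5 ^ (n + 1) := by
  have : Fact (Nat.Prime 5) := ⟨Nat.prime_five⟩
  have hmod5 : orderOf ((Int.castRingHom (ZMod 5)).mapMatrix (arnoldCatMatrix ℤ)) = 10 := by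
    rw [RingHom.mapMatrix_arnoldCatMatrix, orderOf_arnoldCatMatrix_zmod_five]
  rw [← RingHom.mapMatrix_arnoldCatMatrix (Int.castRingHom _),
    orderOf_mapMatrix_eq_mul_pow (by decide) hmod5 arnoldCatMatrix_int_pow_ten
      (i := 0) (j := 0) (by decide) n]
  ring

theorem cat_map_period_two_mul_five_pow (s : ℕ) (hs : 1 ≤ s) :
    IsLeast {M : ℕ | 0 < M ∧
        (!![1, 1; 1, 2] : Matrix (Fin 2) (Fin 2) (ZMod (2 * 5 ^ s))) ^ M = 1}
      (3 * (2 * 5 ^ s)) := by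
  obtain ⟨n, rfl⟩ : ∃ n, s = n + 1 := ⟨s - 1, by omega⟩
  have horder : orderOf (arnoldCatMatrix (ZMod (2 * 5 ^ (n + 1)))) = 3 * (2 * 5 ^ (n + 1)) := by
    rw [orderOf_matrix_zmod_mul_eq_lcm (Nat.Coprime.pow_right _ (by norm_num)),
      RingHom.mapMatrix_arnoldCatMatrix, RingHom.mapMatrix_arnoldCatMatrix,
      orderOf_arnoldCatMatrix_zmod_two, orderOf_arnoldCatMatrix_zmod_five_pow]
    exact Nat.Coprime.lcm_eq_mul (Nat.Coprime.mul_right (by norm_num)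
      (Nat.Coprime.pow_right _ (by norm_num)))
  rw [← horder]
  exact isLeast_orderOf (orderOf_pos_iff.1 (horder ▸ by positivity))
end
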